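/- Let K be a simplicial complex on the vertex set [m] and let I ⊆ [m] be a non-empty subset. Then the polyhedral product (X, A)^{K_I} is a retract of (X, A)^K: writing I = {i_1, …, i_k}, the coordinate projection ∏_{j=1}^m X_j → ∏_{j=1}^k X_{i_j} restricts to a continuous map r : (X, A)^K → (X, A)^{K_I} such that the composite r ∘ j_I is the identity map of (X, A)^{K_I}. -/

import Mathlib

set_option maxHeartbeats 1000000
set_option synthInstance.maxHeartbeats 1000000
set_option linter.unusedVariables false

open scoped BigOperators

universe u v




/-! ## Abstract simplicial complexes on the vertex set `Fin m` -/

/-- A collection of finite subsets of `Fin m` closed under taking subsets.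
(Conditions such as `∅ ∈ faces` or "no ghost vertices", i.e. all singletons are
faces, are imposed as separate hypotheses, so that constructions like full
subcomplexes stay in this type.) -/
structure SimComplex (m : ℕ) where
  faces : Set (Finset (Fin m))
  down_closed : ∀ ⦃σ τ : Finset (Fin m)⦄, σ ∈ faces → τ ⊆ σ → τ ∈ faces

namespace SimComplex

variable {m : ℕ}

theorem ext' {K L : SimComplex m} (h : K.faces = L.faces) : K = L := by
  cases K; cases L; simpa using h

/-- The full subcomplex `K_I` on a vertex set `I`. -/
def fullSub (K : SimComplex m) (I : Set (Fin m)) : SimComplex m :=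
  ⟨{σ | σ ∈ K.faces ∧ (σ : Set (Fin m)) ⊆ I}, fun σ τ hσ hτ =>
    ⟨K.down_closed hσ.1 hτ, (Finset.coe_subset.2 hτ).trans hσ.2⟩⟩

/-- The deletion complex `K - {i}`. -/
def delete (K : SimComplex m) (i : Fin m) : SimComplex m := K.fullSub {i}ᶜ

/-- The full simplex on a vertex set `S` (all subsets of `S`). -/
def simplexOn (S : Finset (Fin m)) : SimComplex m :=
  ⟨{σ | σ ⊆ S}, fun _ _ hσ hτ => hτ.trans hσ⟩

/-- The (internal) join `K ∗ L` of two simplicial complexes on `Fin m`. -/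
def join (K L : SimComplex m) : SimComplex m where
  faces := {σ | ∃ τ ∈ K.faces, ∃ υ ∈ L.faces, σ = τ ∪ υ}
  down_closed := by
    rintro σ τ ⟨a, ha, b, hb, rfl⟩ hτ
    refine ⟨τ ∩ a, K.down_closed ha Finset.inter_subset_right,
      τ ∩ b, L.down_closed hb Finset.inter_subset_right, ?_⟩
    ext x
    simp only [Finset.mem_union, Finset.mem_inter]
    constructor
    · intro hx
      rcases Finset.mem_union.1 (hτ hx) with h | h
      · exact Or.inl ⟨hx, h⟩
      · exact Or.inr ⟨hx, h⟩
    · rintro (⟨h, _⟩ | ⟨h, _⟩) <;> exact h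

/-- The star of a vertex `v`: all `σ` with `{v} ∪ σ ∈ K`. -/
def star (K : SimComplex m) (v : Fin m) : SimComplex m :=
  ⟨{σ | insert v σ ∈ K.faces}, fun _ τ hσ hτ =>
    K.down_closed hσ (Finset.insert_subset_insert v hτ)⟩

/-- The link of a vertex `v`. -/
def link (K : SimComplex m) (v : Fin m) : SimComplex m :=
  ⟨{σ | v ∉ σ ∧ insert v σ ∈ K.faces}, fun σ τ hσ hτ =>
    ⟨fun hv => hσ.1 (hτ hv), K.down_closed hσ.2 (Finset.insert_subset_insert v hτ)⟩⟩

/-- The core of `K`: the full subcomplex on the vertices whose star is not all of `K`. -/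
def core (K : SimComplex m) : SimComplex m := K.fullSub {v | K.star v ≠ K}

open Classical in
/-- The vertex set of `K`. -/
noncomputable def vertexFinset (K : SimComplex m) : Finset (Fin m) :=
  Finset.univ.filter fun i => ({i} : Finset (Fin m)) ∈ K.faces

/-- The geometric realization `|K|`, as a subset of `Fin m → ℝ`. -/
def realization (K : SimComplex m) : Set (Fin m → ℝ) :=
  {x | (∀ i, 0 ≤ x i) ∧ (∑ i, x i) = 1 ∧ ∃ σ ∈ K.faces, ∀ i, x i ≠ 0 → i ∈ σ}

end SimComplex




/-! ## Polyhedral products -/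

section PolyProd

variable {m : ℕ}

/-- The polyhedral product `(X, A)^K ⊆ ∏ᵢ Xᵢ`. -/
def polyProd (K : SimComplex m) (X : Fin m → Type u) (A : ∀ i, Set (X i)) :
    Set (∀ i, X i) :=
  ⋃ σ ∈ K.faces, {x | ∀ i, i ∉ σ → x i ∈ A i}

/-- The polyhedral product of the full subcomplex `K_I`, as a subspace of `∏_{i ∈ I} Xᵢ`. -/
def polyProdOn (K : SimComplex m) (I : Finset (Fin m)) (X : Fin m → Type u)
    (A : ∀ i, Set (X i)) : Set (∀ i : I, X i) :=
  ⋃ σ ∈ {τ ∈ K.faces | (τ : Set (Fin m)) ⊆ (I : Set (Fin m))},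
    {x | ∀ i : I, (i : Fin m) ∉ σ → x i ∈ A i}

theorem pt_mem_polyProd {K : SimComplex m} {X : Fin m → Type u} {A : ∀ i, Set (X i)}
    (h0 : ∅ ∈ K.faces) {pt : ∀ i, X i} (hpt : ∀ i, pt i ∈ A i) :
    pt ∈ polyProd K X A :=
  Set.mem_biUnion h0 fun i _ => hpt i

theorem pt_mem_polyProdOn {K : SimComplex m} {I : Finset (Fin m)} {X : Fin m → Type u}
    {A : ∀ i, Set (X i)} (h0 : ∅ ∈ K.faces) {pt : ∀ i, X i} (hpt : ∀ i, pt i ∈ A i) :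
    (fun i : I => pt i) ∈ polyProdOn K I X A :=
  Set.mem_biUnion (show (∅ : Finset (Fin m)) ∈ _ from ⟨h0, by simp⟩) fun i _ => hpt i

/-- Extending a point of `∏_{i ∈ I} Xᵢ` to `∏ᵢ Xᵢ` by placing basepoints in the
missing coordinates.  This is the underlying function of the natural inclusion
`(X, A)^{K_I} → (X, A)^K`. -/
def extendPt (I : Finset (Fin m)) {X : Fin m → Type u} (pt : ∀ i, X i)
    (x : ∀ i : I, X i) : ∀ i, X i :=
  fun i => if h : i ∈ I then x ⟨i, h⟩ else pt i

end PolyProd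

/-! ## Moment-angle complexes -/

section MomentAngle

variable {m : ℕ}

/-- The unit disk `D² ⊆ ℂ`. -/
abbrev Disk2 : Type := (Metric.closedBall (0 : ℂ) 1 : Set ℂ)

/-- The boundary circle `S¹ ⊆ D²`. -/
def diskCircle : Set Disk2 := {z | ‖(z : ℂ)‖ = 1}

/-- `1 ∈ S¹ ⊆ D²`, the basepoint. -/
def diskOne : Disk2 := ⟨1, by simp⟩

theorem diskOne_mem_circle : diskOne ∈ diskCircle := by simp [diskCircle, diskOne]

/-- The moment-angle complex `Z_K` as a subset of `(D²)^m`. -/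
def momentAngleSet (K : SimComplex m) : Set (Fin m → Disk2) :=
  polyProd K (fun _ => Disk2) (fun _ => diskCircle)

/-- The moment-angle complex `Z_{K_I}` of a full subcomplex, inside `(D²)^I`. -/
def momentAngleSetOn (K : SimComplex m) (I : Finset (Fin m)) : Set (∀ _ : I, Disk2) :=
  polyProdOn K I (fun _ => Disk2) (fun _ => diskCircle)

/-- The interval `D¹ = [-1, 1]`. -/
abbrev Disk1 : Type := (Set.Icc (-1 : ℝ) 1 : Set ℝ)

/-- `S⁰ = {-1, 1} ⊆ D¹`. -/
def diskEnds : Set Disk1 := {x | (x : ℝ) = -1 ∨ (x : ℝ) = 1}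

def diskOne1 : Disk1 := ⟨1, by constructor <;> norm_num⟩

theorem diskOne1_mem_ends : diskOne1 ∈ diskEnds := by simp [diskEnds, diskOne1]

/-- The real moment-angle complex `R_K` as a subset of `(D¹)^m`. -/
def realMomentAngleSet (K : SimComplex m) : Set (Fin m → Disk1) :=
  polyProd K (fun _ => Disk1) (fun _ => diskEnds)

def realMomentAngleSetOn (K : SimComplex m) (I : Finset (Fin m)) : Set (∀ _ : I, Disk1) :=
  polyProdOn K I (fun _ => Disk1) (fun _ => diskEnds)

end MomentAngle



/-! ## Pointed spaces and classical constructions -/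

/-- A pointed topological space. -/
structure PtSpace : Type (u + 1) where
  carrier : Type u
  [top : TopologicalSpace carrier]
  pt : carrier

attribute [instance] PtSpace.top

namespace PtSpace

/-- The reduced suspension `ΣX = (X × I) / (X × {0} ∪ X × {1} ∪ {pt} × I)`. -/
def susp (P : PtSpace.{u}) : PtSpace.{u} where
  carrier := Quot (fun p q : P.carrier × unitInterval => p = q ∨
    ((p.2 = 0 ∨ p.2 = 1 ∨ p.1 = P.pt) ∧ (q.2 = 0 ∨ q.2 = 1 ∨ q.1 = P.pt)))
  pt := Quot.mk _ (P.pt, 0)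

/-- Iterated reduced suspension `Σⁿ X`. -/
def iterSusp : ℕ → PtSpace.{u} → PtSpace.{u}
  | 0, P => P
  | n + 1, P => susp (iterSusp n P)

/-- The smash product of a family of pointed spaces: the quotient of the product
by the fat wedge. -/
def smashFam {ι : Type v} (P : ι → PtSpace.{u}) : PtSpace.{max u v} where
  carrier := Quot (fun p q : ∀ i, (P i).carrier => p = q ∨
    ((∃ i, p i = (P i).pt) ∧ (∃ i, q i = (P i).pt)))
  pt := Quot.mk _ fun i => (P i).pt

/-- The smash product `P ∧ Q` of two pointed spaces. -/
def smash (P : PtSpace.{u}) (Q : PtSpace.{v}) : PtSpace.{max u v} where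
  carrier := Quot (fun p q : P.carrier × Q.carrier => p = q ∨
    ((p.1 = P.pt ∨ p.2 = Q.pt) ∧ (q.1 = P.pt ∨ q.2 = Q.pt)))
  pt := Quot.mk _ (P.pt, Q.pt)

/-- Auxiliary predicate: a point of `(Σ i, P i) ⊕ PUnit` that gets identified with
the basepoint in the wedge. -/
def isWedgePt {ι : Type v} (P : ι → PtSpace.{u}) : ((Σ i, (P i).carrier) ⊕ PUnit) → Prop
  | Sum.inl s => s.2 = (P s.1).pt
  | Sum.inr _ => True

/-- The wedge `⋁ᵢ Pᵢ` of a family of pointed spaces (a one-point union; for the empty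
family it is a point). -/
def wedge {ι : Type v} (P : ι → PtSpace.{u}) : PtSpace.{max u v} where
  carrier := Quot (fun p q : (Σ i, (P i).carrier) ⊕ PUnit => p = q ∨
    (isWedgePt P p ∧ isWedgePt P q))
  pt := Quot.mk _ (Sum.inr PUnit.unit)

end PtSpace

/-! ## Reduced cones -/

/-- The reduced cone `CX = (X × I) / (X × {1} ∪ {x₀} × I)` on a pointed space. -/
abbrev RedCone (X : Type u) [TopologicalSpace X] (x₀ : X) : Type u :=
  Quot (fun p q : X × unitInterval => p = q ∨
    ((p.2 = 1 ∨ p.1 = x₀) ∧ (q.2 = 1 ∨ q.1 = x₀)))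

/-- The canonical inclusion `X → CX`, `x ↦ (x, 0)`. -/
def coneIncl (X : Type u) [TopologicalSpace X] (x₀ : X) : X → RedCone X x₀ :=
  fun x => Quot.mk _ (x, 0)

/-! ## CW-complexes, homotopy equivalences -/

/-- A space admits a CW-structure: it is homeomorphic to the geometric realization of
some CW-complex in the sense of `CWComplex`. -/
def IsCW (X : Type u) [TopologicalSpace X] : Prop :=
  ∃ (C : TopCat.{u}) (_ : TopCat.CWComplex C), Nonempty (X ≃ₜ ↥C)

/-- A continuous map is a homotopy equivalence. -/
def IsHtpyEquiv {X : Type u} {Y : Type v} [TopologicalSpace X] [TopologicalSpace Y]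
    (f : C(X, Y)) : Prop :=
  ∃ g : C(Y, X), (g.comp f).Homotopic (ContinuousMap.id X) ∧
    (f.comp g).Homotopic (ContinuousMap.id Y)

/-! ## Spheres and connected sums of sphere products -/

/-- The `n`-sphere `Sⁿ ⊆ ℝ^{n+1}`. -/
abbrev nSphere (n : ℕ) : Type :=
  (Metric.sphere (0 : EuclideanSpace ℝ (Fin (n + 1))) 1 : Set (EuclideanSpace ℝ (Fin (n + 1))))

/-- A basepoint of `Sⁿ`. -/
noncomputable def spherePt (n : ℕ) : nSphere n :=
  ⟨EuclideanSpace.single 0 1, by simp [EuclideanSpace.norm_single]⟩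

/-- `Sⁿ` as a pointed space. -/
noncomputable def spherePtSpace (n : ℕ) : PtSpace.{0} := ⟨nSphere n, spherePt n⟩

/-- The product of spheres `S^p × S^q`. -/
abbrev sphereProd (p q : ℕ) : Type := nSphere p × nSphere q

/-- `X` is a connected sum `M # N` of `n`-manifolds: `X` is covered by open sets
`U ≅ M ∖ pt` and `V ≅ N ∖ pt` with `U ∩ V ≅ S^{n-1} × ℝ`. -/
def IsConnSum2 (n : ℕ) (X : Type*) [TopologicalSpace X] (M : Type*) [TopologicalSpace M]
    (N : Type*) [TopologicalSpace N] : Prop :=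
  ∃ U V : Set X, IsOpen U ∧ IsOpen V ∧ U ∪ V = Set.univ ∧
    (∃ p : M, Nonempty (U ≃ₜ ({p}ᶜ : Set M))) ∧
    (∃ q : N, Nonempty (V ≃ₜ ({q}ᶜ : Set N))) ∧
    Nonempty (↥(U ∩ V) ≃ₜ
      (Metric.sphere (0 : EuclideanSpace ℝ (Fin n)) 1 : Set (EuclideanSpace ℝ (Fin n))) × ℝ)

/-- `X` is the connected sum `#ₖ (S^{p_k} × S^{n - p_k})` of the sphere products
determined by the list `L = [p₁, …, p_ℓ]` (and total dimension `n`). -/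
def IsConnSumSphereProducts (n : ℕ) : List ℕ → (X : Type) → TopologicalSpace X → Prop
  | [], _, _ => False
  | [p], X, tX => Nonempty (@Homeomorph X (sphereProd p (n - p)) tX inferInstance)
  | p :: q :: L, X, tX =>
      ∃ (Y : Type) (tY : TopologicalSpace Y),
        IsConnSumSphereProducts n (q :: L) Y tY ∧
        @IsConnSum2 n X tX (sphereProd p (n - p)) inferInstance Y tY

/-- `X` is homeomorphic to a connected sum of sphere products with two spheres in
each product: `X ≅ #_{k=1}^ℓ (S^{n_k} × S^{n-n_k})` with `ℓ ≥ 1` and `1 ≤ n_k ≤ n - 1`. -/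
def HomeoConnSumSphereProducts (X : Type) (tX : TopologicalSpace X) : Prop :=
  ∃ (n : ℕ) (L : List ℕ), L ≠ [] ∧ (∀ p ∈ L, 1 ≤ p ∧ p ≤ n - 1) ∧
    IsConnSumSphereProducts n L X tX

/-- `X` is homotopy equivalent to a connected sum of sphere products with two spheres
in each product. -/
def HtpyEquivConnSumSphereProducts (X : Type) (tX : TopologicalSpace X) : Prop :=
  ∃ (n : ℕ) (L : List ℕ), L ≠ [] ∧ (∀ p ∈ L, 1 ≤ p ∧ p ≤ n - 1) ∧
    ∃ (W : Type) (tW : TopologicalSpace W), IsConnSumSphereProducts n L W tW ∧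
      Nonempty (@ContinuousMap.HomotopyEquiv X W tX tW)

/-! ## Stanley–Reisner rings, Koszul complexes and the Golod property -/

section Golod

set_option maxHeartbeats 1000000
set_option synthInstance.maxHeartbeats 1000000

variable (k : Type) [CommRing k] {m : ℕ} (K : SimComplex m) (V : Finset (Fin m))

/-- The Stanley–Reisner ideal of `K` (on the vertex set `V`): the ideal generated by
the square-free monomials corresponding to non-faces of `K`. -/
noncomputable def srIdeal : Ideal (MvPolynomial V k) :=
  Ideal.span ((fun σ : Finset V => ∏ i ∈ σ, (MvPolynomial.X i : MvPolynomial V k)) ''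
    {σ : Finset V | σ.image Subtype.val ∉ K.faces})

/-- The Stanley–Reisner ring `k[K] = k[v_i : i ∈ V] / I_K`. -/
abbrev SRRing := MvPolynomial V k ⧸ srIdeal k K V

/-- The residue class of the variable `v_i` in the Stanley–Reisner ring. -/
noncomputable def srVar (i : V) : SRRing k K V := Ideal.Quotient.mk _ (MvPolynomial.X i)

/-- The linear form `(V → k[K]) → k[K]`, `e_i ↦ v_i`, whose contraction gives the
Koszul differential. -/
noncomputable def koszulForm : Module.Dual (SRRing k K V) (V → SRRing k K V) :=
  ∑ i : V, srVar k K V i •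
    (LinearMap.proj i : (V → SRRing k K V) →ₗ[SRRing k K V] SRRing k K V)

/-- The Koszul complex `k[K] ⊗ Λ(u_i : i ∈ V)`, realized as the exterior algebra
(= Clifford algebra with zero form) over `k[K]` on `k[K]^V`. -/
abbrev KoszulAlg :=
  CliffordAlgebra (0 : QuadraticForm (SRRing k K V) (V → SRRing k K V))

/-- The Koszul differential: contraction with `koszulForm`. -/
noncomputable def koszulD : KoszulAlg k K V →ₗ[SRRing k K V] KoszulAlg k K V :=
  CliffordAlgebra.contractLeft (koszulForm k K V)

/-- The homological grading of the Koszul complex by exterior degree. -/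
noncomputable def koszulGrade (n : ℕ) : Submodule (SRRing k K V) (KoszulAlg k K V) :=
  LinearMap.range (CliffordAlgebra.ι
    (0 : QuadraticForm (SRRing k K V) (V → SRRing k K V))) ^ n

/-- An admissible pair `(a, n)`: a homogeneous Koszul cycle `a` of positive degree `n`. -/
def IsAdm (p : KoszulAlg k K V × ℕ) : Prop :=
  1 ≤ p.2 ∧ p.1 ∈ koszulGrade k K (V := V) (n := p.2) ∧ koszulD k K V p.1 = 0

/-- The degree of the Massey-operation value attached to a tuple of cycles. -/
def tupleDeg (l : List (KoszulAlg k K V × ℕ)) : ℕ :=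
  (l.map Prod.snd).sum + l.length - 1

/-- `k[K]` is Golod over `k`: all products and higher Massey products on the Koszul
homology `Tor_{k[v_i]}(k[K], k)` vanish, i.e. the Koszul complex admits a trivial
Massey operation `μ`: a function on tuples of homogeneous cycles of positive degree
with `μ(a) = a` and
`d μ(a₁,…,a_p) = ∑_{j=1}^{p-1} (-1)^{deg μ(a₁,…,a_j) + 1} μ(a₁,…,a_j) · μ(a_{j+1},…,a_p)`. -/
def GolodOver : Prop :=
  ∃ μ : List (KoszulAlg k K V × ℕ) → KoszulAlg k K V,
    (∀ p, IsAdm k K V p → μ [p] = p.1) ∧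
    (∀ l : List (KoszulAlg k K V × ℕ), 2 ≤ l.length → (∀ p ∈ l, IsAdm k K V p) →
      μ l ∈ koszulGrade k K (V := V) (n := tupleDeg k K V l) ∧
      koszulD k K V (μ l) =
        ∑ j ∈ Finset.Ioo 0 l.length,
          ((-1 : ℤ) ^ (tupleDeg k K V (l.take j) + 1)) • (μ (l.take j) * μ (l.drop j)))

end Golod

/-- `K` is Golod: `k[K]` is Golod over every field `k`, where `K` is considered on its
own vertex set. -/
def IsGolod {m : ℕ} (K : SimComplex m) : Prop :=
  ∀ (k : Type) [Field k], GolodOver k K K.vertexFinset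

/-- `K` is minimally non-Golod: `K` is not Golod, but deleting any vertex of `K`
yields a Golod complex. -/
def MinimallyNonGolod {m : ℕ} (K : SimComplex m) : Prop :=
  ¬ IsGolod K ∧ ∀ i ∈ K.vertexFinset, IsGolod (K.delete i)

/-- A commutative ring is Gorenstein if it has finite injective dimension over
itself, i.e. `Ext^i(M, R) = 0` for all modules `M` and all sufficiently large `i`. -/
def IsGorensteinRing (R : Type) [CommRing R] : Prop :=
  ∃ n : ℕ, ∀ (M : ModuleCat.{0} R) (i : ℕ), n < i →
    Subsingleton (((Ext R (ModuleCat.{0} R) i).obj (Opposite.op M)).obj (ModuleCat.of R R))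

/-- `K` is Gorenstein*: for every field `k` the Stanley–Reisner ring `k[K]` is
Gorenstein, and `K = core K`. -/
def GorensteinStar {m : ℕ} (K : SimComplex m) : Prop :=
  (∀ (k : Type) [Field k], IsGorensteinRing (SRRing k K K.vertexFinset)) ∧ K.core = K

section PolyProdRetract

variable {m : ℕ} {X : Fin m → Type u} {A : ∀ i, Set (X i)}

theorem extendPt_mem_polyProd {K : SimComplex m} {I : Finset (Fin m)} {pt : ∀ i, X i}
    (hpt : ∀ i, pt i ∈ A i) {x : ∀ i : I, X i} (hx : x ∈ polyProdOn K I X A) :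
    extendPt I pt x ∈ polyProd K X A := by
  obtain ⟨σ, ⟨hσ, -⟩, hxσ⟩ := Set.mem_iUnion₂.1 hx
  refine Set.mem_biUnion hσ fun i hi => ?_
  by_cases h : i ∈ I
  · simpa [extendPt, h] using hxσ ⟨i, h⟩ hi
  · simpa [extendPt, h] using hpt i

-- A face `σ` of `K` witnessing `y` restricts to the face `σ ∩ I` of `K_I`.
theorem restrict_mem_polyProdOn {K : SimComplex m} {I : Finset (Fin m)} {y : ∀ i, X i}
    (hy : y ∈ polyProd K X A) : (fun i : I => y i) ∈ polyProdOn K I X A := by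
  obtain ⟨σ, hσ, hyσ⟩ := Set.mem_iUnion₂.1 hy
  exact Set.mem_biUnion (x := σ ∩ I)
    ⟨K.down_closed hσ Finset.inter_subset_left, Finset.coe_subset.2 Finset.inter_subset_right⟩
    fun i hi => hyσ i fun h => hi (Finset.mem_inter.2 ⟨h, i.2⟩)

theorem restrict_extendPt (I : Finset (Fin m)) (pt : ∀ i, X i) (x : ∀ i : I, X i) :
    (fun i : I => extendPt I pt x i) = x :=
  funext fun i => dif_pos i.2

variable [∀ i, TopologicalSpace (X i)]

theorem continuous_extendPt (I : Finset (Fin m)) (pt : ∀ i, X i) :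
    Continuous (extendPt I pt) := by
  refine continuous_pi fun i => ?_
  by_cases h : i ∈ I
  · simpa only [extendPt, h, dif_pos] using continuous_apply (⟨i, h⟩ : I)
  · simpa only [extendPt, h, dif_neg, not_false_iff] using continuous_const

def polyProdInclusion (K : SimComplex m) (I : Finset (Fin m)) {pt : ∀ i, X i}
    (hpt : ∀ i, pt i ∈ A i) : C(polyProdOn K I X A, polyProd K X A) where
  toFun x := ⟨extendPt I pt x, extendPt_mem_polyProd hpt x.2⟩
  continuous_toFun :=
    ((continuous_extendPt I pt).comp continuous_subtype_val).subtype_mk _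

def polyProdRestriction (K : SimComplex m) (I : Finset (Fin m)) :
    C(polyProd K X A, polyProdOn K I X A) where
  toFun y := ⟨fun i : I => y.1 i, restrict_mem_polyProdOn y.2⟩
  continuous_toFun :=
    (continuous_pi fun i : I =>
      (continuous_apply (i : Fin m)).comp continuous_subtype_val).subtype_mk _

theorem polyProdRestriction_polyProdInclusion (K : SimComplex m) (I : Finset (Fin m))
    {pt : ∀ i, X i} (hpt : ∀ i, pt i ∈ A i) (x : polyProdOn K I X A) :
    polyProdRestriction K I (polyProdInclusion K I hpt x) = x :=
  Subtype.ext (restrict_extendPt I pt x)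

end PolyProdRetract

theorem polyhedralProduct_fullSub_retract_general {m : ℕ} (K : SimComplex m)
    (X : Fin m → Type u) [∀ i, TopologicalSpace (X i)] (A : ∀ i, Set (X i))
    (pt : ∀ i, X i) (hpt : ∀ i, pt i ∈ A i)
    (I : Finset (Fin m)) :
    ∃ (jI : C((polyProdOn K I X A : Set (∀ i : I, X i)), (polyProd K X A : Set (∀ i, X i))))
      (r : C((polyProd K X A : Set (∀ i, X i)), (polyProdOn K I X A : Set (∀ i : I, X i)))),
      (∀ x, (jI x).1 = extendPt I pt x.1) ∧
      (∀ y, (r y).1 = fun i : I => y.1 i) ∧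
      (∀ x, r (jI x) = x) :=
  ⟨polyProdInclusion K I hpt, polyProdRestriction K I, fun _ => rfl, fun _ => rfl,
    polyProdRestriction_polyProdInclusion K I hpt⟩

/-- **Proposition 2.1.** For a nonempty `I ⊆ [m]`, the polyhedral product
`(X, A)^{K_I}` is a retract of `(X, A)^K`: the coordinate projection restricts to a
continuous retraction `r` of the natural inclusion `j_I`. -/
theorem polyhedralProduct_fullSub_retract {m : ℕ} (K : SimComplex m)
    (hempty : ∅ ∈ K.faces) (hvert : ∀ i : Fin m, ({i} : Finset (Fin m)) ∈ K.faces)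
    (X : Fin m → Type u) [∀ i, TopologicalSpace (X i)] (A : ∀ i, Set (X i))
    (pt : ∀ i, X i) (hpt : ∀ i, pt i ∈ A i)
    (hCWX : ∀ i, IsCW (X i)) (hCWA : ∀ i, IsCW (A i))
    (I : Finset (Fin m)) (hI : I.Nonempty) :
    ∃ (jI : C((polyProdOn K I X A : Set (∀ i : I, X i)), (polyProd K X A : Set (∀ i, X i))))
      (r : C((polyProd K X A : Set (∀ i, X i)), (polyProdOn K I X A : Set (∀ i : I, X i)))),
      (∀ x, (jI x).1 = extendPt I pt x.1) ∧
      (∀ y, (r y).1 = fun i : I => y.1 i) ∧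
      (∀ x, r (jI x) = x) :=
  polyhedralProduct_fullSub_retract_general K X A pt hpt I
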